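/- Let (x,y) be a cherry of a binary phylogenetic X-tree T and let δ be a dissimilarity map on X quartet consistent with T. Define the reduced map δ' on X' = (X \ {x,y}) ∪ {z} by δ'(z,a) = (1/2)(δ(x,a) + δ(y,a)) for a ∈ X \ {x,y} and δ'(a,b) = δ(a,b) otherwise. Let T' be the tree obtained from T by deleting the leaves x, y and labeling their former parent by z. Then δ' is quartet consistent with T'. -/

import Mathlib

/-! On `X \ {y}`, with `x` standing for `z`, the reduced map `δ'` is the average of `δ` and of
`δ ∘ r`, where `r` relabels `x` as `y`. A split of `T` separating two leaves of `X \ {y}` from two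
others cannot separate the cherry, so `r` maps quartets of `T'` to quartets of `T`; hence both `δ`
and `δ ∘ r` satisfy the four-point inequalities of `T'`, and these inequalities, being linear in
the map, survive averaging. -/

open Finset
open scoped Classical

/-- `w_δ(ij:kl) = (1/2)(δ(i,k)+δ(i,l)+δ(j,k)+δ(j,l)) - δ(i,j) - δ(k,l)`. -/
noncomputable def njw {X : Type*} (δ : X → X → ℝ) (i j k l : X) : ℝ :=
  (δ i k + δ i l + δ j k + δ j l) / 2 - δ i j - δ k l

/-- Edge `e` (with split side `σ e`) separates the pair `p,q` from the pair `r,s`. -/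
def sepE {X E : Type*} (σ : E → Finset X) (e : E) (p q r s : X) : Prop :=
  (p ∈ σ e ∧ q ∈ σ e ∧ r ∉ σ e ∧ s ∉ σ e) ∨
  (p ∉ σ e ∧ q ∉ σ e ∧ r ∈ σ e ∧ s ∈ σ e)

/-- `(ij:kl)` is a quartet of the tree encoded by the split system `σ`:
some internal edge separates `{i,j}` from `{k,l}`. -/
def isQuartet {X E : Type*} (σ : E → Finset X) (i j k l : X) : Prop :=
  ∃ e, sepE σ e i j k l

/-- Pairwise compatibility of the splits: the condition under which a split system
is exactly the split system of a (phylogenetic) tree. -/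
def splitsCompatible {X E : Type*} [Fintype X] (σ : E → Finset X) : Prop :=
  ∀ e f, σ e ⊆ σ f ∨ σ f ⊆ σ e ∨ (∀ a, a ∈ σ e → a ∉ σ f) ∨ (∀ a, a ∈ σ e ∨ a ∈ σ f)

/-- A dissimilarity map `δ` is quartet consistent with the tree encoded by `σ`. -/
def quartetConsistent {X E : Type*} (σ : E → Finset X) (δ : X → X → ℝ) : Prop :=
  ∀ i j k l : X, i ≠ j → i ≠ k → i ≠ l → j ≠ k → j ≠ l → k ≠ l →
    isQuartet σ i j k l →
      njw δ i j k l > max (njw δ i k j l) (njw δ i l j k)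

/-- The scaled Z-criterion `Z_δ(i,j) = ∑_{{k,l} ⊆ X\{i,j}} w_δ(ij:kl)`
(sum over unordered pairs, written as half the sum over ordered pairs). -/
noncomputable def njZ {X : Type*} [Fintype X] [DecidableEq X]
    (δ : X → X → ℝ) (i j : X) : ℝ :=
  (1 / 2) * ∑ k ∈ (Finset.univ.erase i).erase j,
    ∑ l ∈ ((Finset.univ.erase i).erase j).erase k, njw δ i j k l

/-- `(x,y)` is a cherry of the tree encoded by `σ`: some edge induces the split
`{x,y} | X \ {x,y}`. -/
def isCherry {X E : Type*} [Fintype X] [DecidableEq X]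
    (σ : E → Finset X) (x y : X) : Prop :=
  x ≠ y ∧ ∃ e, σ e = {x, y} ∨ σ e = ({x, y} : Finset X)ᶜ

section QuartetInequality

variable {X : Type*}

def QuartetIneq (δ : X → X → ℝ) (i j k l : X) : Prop :=
  njw δ i j k l > max (njw δ i k j l) (njw δ i l j k)

lemma quartetIneq_average {δ₁ δ₂ : X → X → ℝ} {i j k l : X}
    (h₁ : QuartetIneq δ₁ i j k l) (h₂ : QuartetIneq δ₂ i j k l) :
    QuartetIneq (fun a b => (δ₁ a b + δ₂ a b) / 2) i j k l := by
  simp only [QuartetIneq, njw, gt_iff_lt, max_lt_iff] at *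
  constructor <;> linarith [h₁.1, h₁.2, h₂.1, h₂.2]

lemma QuartetIneq.congr {δ₁ δ₂ : X → X → ℝ} {S : Set X}
    (h : ∀ p ∈ S, ∀ q ∈ S, p ≠ q → δ₁ p q = δ₂ p q) {i j k l : X}
    (hi : i ∈ S) (hj : j ∈ S) (hk : k ∈ S) (hl : l ∈ S)
    (hij : i ≠ j) (hik : i ≠ k) (hil : i ≠ l) (hjk : j ≠ k) (hjl : j ≠ l) (hkl : k ≠ l)
    (hδ : QuartetIneq δ₂ i j k l) : QuartetIneq δ₁ i j k l := by
  unfold QuartetIneq njw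
  rw [h i hi j hj hij, h i hi k hk hik, h i hi l hl hil, h j hj k hk hjk, h j hj l hl hjl,
    h k hk l hl hkl, h k hk j hj hjk.symm, h l hl j hj hjl.symm, h l hl k hk hkl.symm]
  exact hδ

end QuartetInequality

section Cherry

variable {X E : Type*} [Fintype X] [DecidableEq X] {σ : E → Finset X}

/-- Compatibility with the split `{x, y}` leaves only splits with a side inside `{x, y}` able to
separate `x` from `y`. -/
lemma mem_iff_mem_of_isCherry (hcompat : splitsCompatible σ) {x y : X}
    (hcherry : isCherry σ x y) {e : E} {i j k l : X}
    (hi : i ∈ σ e) (hj : j ∈ σ e) (hk : k ∉ σ e) (hl : l ∉ σ e)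
    (hiy : i ≠ y) (hjy : j ≠ y) (hky : k ≠ y) (hly : l ≠ y) (hij : i ≠ j) (hkl : k ≠ l) :
    x ∈ σ e ↔ y ∈ σ e := by
  obtain ⟨-, f, hf⟩ := hcherry
  rcases hcompat e f with h | h | h | h <;> rcases hf with hf | hf <;>
    simp only [hf, Finset.subset_iff, Finset.mem_insert, Finset.mem_singleton,
      Finset.mem_compl] at h <;> grind

lemma isQuartet_update_of_isCherry (hcompat : splitsCompatible σ) {x y : X}
    (hcherry : isCherry σ x y) {i j k l : X}
    (hiy : i ≠ y) (hjy : j ≠ y) (hky : k ≠ y) (hly : l ≠ y) (hij : i ≠ j) (hkl : k ≠ l)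
    (hq : isQuartet σ i j k l) :
    isQuartet σ (Function.update id x y i) (Function.update id x y j)
      (Function.update id x y k) (Function.update id x y l) := by
  obtain ⟨e, he⟩ := hq
  have hxy : x ∈ σ e ↔ y ∈ σ e := by
    rcases he with ⟨hi, hj, hk, hl⟩ | ⟨hi, hj, hk, hl⟩
    · exact mem_iff_mem_of_isCherry hcompat hcherry hi hj hk hl hiy hjy hky hly hij hkl
    · exact mem_iff_mem_of_isCherry hcompat hcherry hk hl hi hj hky hly hiy hjy hkl hij
  have hmem : ∀ a, Function.update id x y a ∈ σ e ↔ a ∈ σ e := by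
    intro a
    by_cases hax : a = x
    · rw [hax, Function.update_self, hxy]
    · rw [Function.update_of_ne hax, id]
  exact ⟨e, by simpa only [sepE, hmem] using he⟩

end Cherry

lemma reduced_eq_average {X : Type*} [DecidableEq X] {δ δ' : X → X → ℝ} {x y : X}
    (hsym : ∀ x y, δ x y = δ y x) (hsym' : ∀ p q, δ' p q = δ' q p)
    (hred : ∀ a : X, a ≠ x → a ≠ y → δ' x a = (δ x a + δ y a) / 2)
    (hrest : ∀ a b : X, a ≠ x → a ≠ y → b ≠ x → b ≠ y → δ' a b = δ a b)
    {p q : X} (hpy : p ≠ y) (hqy : q ≠ y) (hpq : p ≠ q) :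
    δ' p q = (δ p q + δ (Function.update id x y p) (Function.update id x y q)) / 2 := by
  by_cases hpx : p = x
  · subst hpx
    rw [hred q hpq.symm hqy, Function.update_self, Function.update_of_ne hpq.symm, id]
  by_cases hqx : q = x
  · subst hqx
    rw [hsym', hred p hpx hpy, Function.update_self, Function.update_of_ne hpx, id,
      hsym q p, hsym y p]
  rw [hrest p q hpx hpy hqx hqy, Function.update_of_ne hpx, Function.update_of_ne hqx, id, id]
  ring

/-- Here the label `x` stands for the new taxon `z` at the former parent of the cherry, so
`δ'` is the reduced map on `X' = X \ {y}` and the quartets of `T'` are those of `T` avoiding `y`. -/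
theorem statement_11_general {X E : Type*} [Fintype X] [DecidableEq X]
    (σ : E → Finset X)
    (hcompat : splitsCompatible σ)
    (δ : X → X → ℝ)
    (hsym : ∀ x y, δ x y = δ y x)
    (hqc : quartetConsistent σ δ)
    (x y : X) (hcherry : isCherry σ x y)
    (δ' : X → X → ℝ)
    (hsym' : ∀ p q, δ' p q = δ' q p)
    (hred : ∀ a : X, a ≠ x → a ≠ y → δ' x a = (δ x a + δ y a) / 2)
    (hrest : ∀ a b : X, a ≠ x → a ≠ y → b ≠ x → b ≠ y → δ' a b = δ a b) :
    ∀ i j k l : X, i ≠ y → j ≠ y → k ≠ y → l ≠ y →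
      i ≠ j → i ≠ k → i ≠ l → j ≠ k → j ≠ l → k ≠ l →
      isQuartet σ i j k l →
        njw δ' i j k l > max (njw δ' i k j l) (njw δ' i l j k) := by
  intro i j k l hiy hjy hky hly hij hik hil hjk hjl hkl hq
  set r := Function.update id x y
  have hr : ∀ {a b}, a ≠ y → b ≠ y → a ≠ b → r a ≠ r b := by
    intro a b hay hby hab
    simp only [r, Function.update_apply, id]
    split_ifs <;> grind
  have hδ : QuartetIneq δ i j k l := hqc i j k l hij hik hil hjk hjl hkl hq
  have hδr : QuartetIneq (fun a b => δ (r a) (r b)) i j k l :=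
    hqc _ _ _ _ (hr hiy hjy hij) (hr hiy hky hik) (hr hiy hly hil) (hr hjy hky hjk)
      (hr hjy hly hjl) (hr hky hly hkl)
      (isQuartet_update_of_isCherry hcompat hcherry hiy hjy hky hly hij hkl hq)
  exact (quartetIneq_average hδ hδr).congr (S := {a | a ≠ y})
    (fun p hp q hq' hpq => reduced_eq_average hsym hsym' hred hrest hp hq' hpq)
    hiy hjy hky hly hij hik hil hjk hjl hkl

/-- reducing a cherry `(x,y)` preserves quartet consistency. The reduced
map `δ'` on `X' = (X \ {x,y}) ∪ {z}` is realized on `X \ {y}` by letting the label `x`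
stand for the new taxon `z` (placed at the former parent of the cherry): thus
`δ'(z,a) = (δ(x,a)+δ(y,a))/2` and `δ'` agrees with `δ` elsewhere. The reduced tree `T'`
induces on `X \ {y}` exactly the quartets of `T` (with `z` in the position of `x`), so
quartet consistency of `δ'` with `T'` reads as below. -/
theorem statement_11 {X E : Type*} [Fintype X] [DecidableEq X]
    (σ : E → Finset X)
    (hcompat : splitsCompatible σ)
    (hnontriv : ∀ e, (σ e).Nonempty ∧ σ e ≠ Finset.univ)
    (δ : X → X → ℝ)
    (hsym : ∀ x y, δ x y = δ y x) (hdiag : ∀ x, δ x x = 0)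
    (hqc : quartetConsistent σ δ)
    (x y : X) (hcherry : isCherry σ x y)
    (δ' : X → X → ℝ)
    (hsym' : ∀ p q, δ' p q = δ' q p) (hdiag' : ∀ p, δ' p p = 0)
    (hred : ∀ a : X, a ≠ x → a ≠ y → δ' x a = (δ x a + δ y a) / 2)
    (hrest : ∀ a b : X, a ≠ x → a ≠ y → b ≠ x → b ≠ y → δ' a b = δ a b) :
    ∀ i j k l : X, i ≠ y → j ≠ y → k ≠ y → l ≠ y →
      i ≠ j → i ≠ k → i ≠ l → j ≠ k → j ≠ l → k ≠ l →
      isQuartet σ i j k l →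
        njw δ' i j k l > max (njw δ' i k j l) (njw δ' i l j k) :=
  statement_11_general σ hcompat δ hsym hqc x y hcherry δ' hsym' hred hrest
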